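/- Let N ≥ 3. If an entangled N-qubit pure state |ψ⟩ is fragile with respect to the loss of every single qubit (ρ_{¬k}(ψ) separable for all k = 1,…,N), then |ψ⟩ is SLOCC-equivalent to the GHZ state: there exist invertible 2×2 complex matrices B_1,…,B_N such that (B_1 ⊗ ⋯ ⊗ B_N)|ψ⟩ = |GHZ_N⟩ up to a global phase. -/

import Mathlib

open scoped BigOperators ComplexConjugate

noncomputable section

/-- A single-qubit unit vector in `ℂ²`. -/
def IsUnitQubit (e : Fin 2 → ℂ) : Prop := ∑ j, Complex.normSq (e j) = 1

/-- Norm-one condition for a multiqubit vector on the register `ι`. -/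
def IsUnitState {ι : Type*} [Fintype ι] [DecidableEq ι] (ψ : (ι → Fin 2) → ℂ) : Prop :=
  ∑ x, Complex.normSq (ψ x) = 1

/-- The product state `⊗ᵢ eᵢ`. -/
def prodState {ι : Type*} [Fintype ι] (e : ι → Fin 2 → ℂ) : (ι → Fin 2) → ℂ :=
  fun x => ∏ i, e i (x i)

/-- A pure state is a product state if it is a tensor product of single-qubit unit vectors. -/
def IsProductState {ι : Type*} [Fintype ι] (ψ : (ι → Fin 2) → ℂ) : Prop :=
  ∃ e : ι → Fin 2 → ℂ, (∀ i, IsUnitQubit (e i)) ∧ ψ = prodState e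

/-- A pure state is entangled if it is not a product state. -/
def IsEntangledState {ι : Type*} [Fintype ι] (ψ : (ι → Fin 2) → ℂ) : Prop :=
  ¬ IsProductState ψ

/-- The projector `|v⟩⟨v|` as a matrix. -/
def proj {α : Type*} (v : α → ℂ) : Matrix α α ℂ :=
  Matrix.of fun x y => v x * conj (v y)

/-- A density matrix on the qubit register `ι` is separable if it is a finite convex
combination of projectors onto product states (and entangled otherwise). -/
def IsSeparableDensity {ι : Type*} [Fintype ι] (ρ : Matrix (ι → Fin 2) (ι → Fin 2) ℂ) : Prop :=
  ∃ (n : ℕ) (w : Fin n → ℝ) (e : Fin n → ι → Fin 2 → ℂ),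
    (∀ m, 0 ≤ w m) ∧ (∑ m, w m = 1) ∧ (∀ m i, IsUnitQubit (e m i)) ∧
    ρ = ∑ m, (w m : ℂ) • proj (prodState (e m))

/-- Assemble a full assignment of the `N` qubits from an assignment `x` of the qubits outside
`S` and an assignment `z` of the qubits in `S`. -/
def mergeCompl {N : ℕ} (S : Finset (Fin N)) (x : {i : Fin N // i ∉ S} → Fin 2)
    (z : {i : Fin N // i ∈ S} → Fin 2) : Fin N → Fin 2 :=
  fun i => if h : i ∈ S then z ⟨i, h⟩ else x ⟨i, h⟩

/-- The reduced density operator `ρ_{¬S}(ψ)`: the partial trace of `|ψ⟩⟨ψ|` over the qubits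
in `S`. -/
def reducedState {N : ℕ} (ψ : (Fin N → Fin 2) → ℂ) (S : Finset (Fin N)) :
    Matrix ({i : Fin N // i ∉ S} → Fin 2) ({i : Fin N // i ∉ S} → Fin 2) ℂ :=
  Matrix.of fun x y => ∑ z : {i : Fin N // i ∈ S} → Fin 2,
    ψ (mergeCompl S x z) * conj (ψ (mergeCompl S y z))

/-- The action of the local operator `B₁ ⊗ ⋯ ⊗ B_N` on an `N`-qubit state. -/
def applyLocal {N : ℕ} (B : Fin N → Matrix (Fin 2) (Fin 2) ℂ)
    (ψ : (Fin N → Fin 2) → ℂ) : (Fin N → Fin 2) → ℂ :=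
  fun x => ∑ y : Fin N → Fin 2, (∏ i, B i (x i) (y i)) * ψ y

/-- The `N`-qubit GHZ state `(|0…0⟩ + |1…1⟩)/√2`. -/
def ghzState (N : ℕ) : (Fin N → Fin 2) → ℂ :=
  fun x => ((if x = fun _ => 0 then (1 : ℂ) else 0) + (if x = fun _ => 1 then (1 : ℂ) else 0))
    / (Real.sqrt 2 : ℝ)

/-!
Split `ψ = |0⟩ ⊗ φ₀ + |1⟩ ⊗ φ₁` at one qubit `k`. A vector orthogonal to `φ₀` and `φ₁` annihilates
`ρ_{¬k}(ψ) = |φ₀⟩⟨φ₀| + |φ₁⟩⟨φ₁|`, hence every product state with positive weight in a separable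
decomposition of it; so these product states span the same space as `φ₀, φ₁`. If that space is a
line, `ψ` is a product state. Otherwise two of the product states `p, q` span it, and
`ψ = a ⊗ p + b ⊗ q` is a sum `E + F` of two unnormalised product vectors. At every qubit `i` the
factors `Eᵢ, Fᵢ` are linearly independent, since otherwise `ψ` factors off qubit `i` and the same
argument applied to `ρ_{¬i}(ψ)` makes it a product state. The local matrices sending `Eᵢ, Fᵢ` to
`|0⟩, |1⟩` then map `ψ` to `|0…0⟩ + |1…1⟩`.
-/

open Submodule Matrix

section LinearAlgebra

variable {α : Type*} [Fintype α]

lemma mem_span_of_forall_star_dotProduct_eq_zero {S : Set (α → ℂ)} {v : α → ℂ}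
    (h : ∀ x, (∀ u ∈ S, star x ⬝ᵥ u = 0) → star x ⬝ᵥ v = 0) : v ∈ span ℂ S := by
  let L := (WithLp.linearEquiv 2 ℂ (α → ℂ)).symm
  have hinner : ∀ x y : α → ℂ, inner ℂ (L x) (L y) = star x ⬝ᵥ y := fun x y =>
    dotProduct_comm _ _
  suffices L v ∈ (span ℂ (L '' S))ᗮᗮ by
    rwa [orthogonal_orthogonal, span_image_linearEquiv, mem_map_equiv, L.symm_apply_apply] at this
  rw [mem_orthogonal]
  intro x hx
  obtain ⟨y, rfl⟩ := L.surjective x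
  rw [hinner]
  refine h y fun u hu => ?_
  rw [← hinner]
  exact inner_left_of_mem_orthogonal (subset_span (Set.mem_image_of_mem L hu)) hx

lemma star_dotProduct_proj_mulVec (x v : α → ℂ) :
    star x ⬝ᵥ (proj v *ᵥ x) = (Complex.normSq (star x ⬝ᵥ v) : ℂ) := by
  rw [← Complex.mul_conj, ← Complex.star_def, ← star_dotProduct,
    show proj v = vecMulVec v (star v) from rfl, vecMulVec_mulVec, op_smul_eq_smul,
    dotProduct_smul, smul_eq_mul, mul_comm]

lemma star_dotProduct_sum_smul_proj_mulVec {κ : Type*} [Fintype κ] (w : κ → ℝ)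
    (v : κ → α → ℂ) (x : α → ℂ) :
    star x ⬝ᵥ ((∑ m, (w m : ℂ) • proj (v m)) *ᵥ x)
      = ((∑ m, w m * Complex.normSq (star x ⬝ᵥ v m) : ℝ) : ℂ) := by
  simp [sum_mulVec, dotProduct_sum, smul_mulVec, dotProduct_smul, star_dotProduct_proj_mulVec]

lemma mem_span_of_sum_smul_proj_eq {κ κ' : Type*} [Fintype κ] [Fintype κ'] {a : κ → ℝ}
    {b : κ' → ℝ} {u : κ → α → ℂ} {v : κ' → α → ℂ} (hb : ∀ m, 0 ≤ b m)
    (h : ∑ j, (a j : ℂ) • proj (u j) = ∑ m, (b m : ℂ) • proj (v m)) {m : κ'} (hm : b m ≠ 0) :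
    v m ∈ span ℂ (u '' {j | a j ≠ 0}) := by
  refine mem_span_of_forall_star_dotProduct_eq_zero fun x hx => ?_
  have hquad : ∑ j, a j * Complex.normSq (star x ⬝ᵥ u j)
      = ∑ m, b m * Complex.normSq (star x ⬝ᵥ v m) := by
    have := congrArg (fun ρ => star x ⬝ᵥ (ρ *ᵥ x)) h
    simp only [star_dotProduct_sum_smul_proj_mulVec] at this
    exact_mod_cast this
  have hzero : ∑ j, a j * Complex.normSq (star x ⬝ᵥ u j) = 0 := by
    refine Finset.sum_eq_zero fun j _ => ?_
    by_cases hj : a j = 0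
    · rw [hj, zero_mul]
    · rw [hx (u j) ⟨j, hj, rfl⟩, map_zero, mul_zero]
  rw [hzero, eq_comm, Finset.sum_eq_zero_iff_of_nonneg fun m _ =>
    mul_nonneg (hb m) (Complex.normSq_nonneg _)] at hquad
  simpa [hm] using hquad m (Finset.mem_univ m)

lemma mem_span_range_of_sum_proj_eq {κ κ' : Type*} [Fintype κ] [Fintype κ'] {b : κ' → ℝ}
    {u : κ → α → ℂ} {v : κ' → α → ℂ} (hb : ∀ m, 0 ≤ b m)
    (h : ∑ j, proj (u j) = ∑ m, (b m : ℂ) • proj (v m)) {m : κ'} (hm : b m ≠ 0) :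
    v m ∈ span ℂ (Set.range u) := by
  simpa using mem_span_of_sum_smul_proj_eq (a := 1) hb (by simpa using h) hm

lemma mem_span_image_of_sum_proj_eq {κ κ' : Type*} [Fintype κ] [Fintype κ'] {b : κ' → ℝ}
    {u : κ → α → ℂ} {v : κ' → α → ℂ}
    (h : ∑ j, proj (u j) = ∑ m, (b m : ℂ) • proj (v m)) (j : κ) :
    u j ∈ span ℂ (v '' {m | b m ≠ 0}) := by
  simpa using mem_span_of_sum_smul_proj_eq (b := 1) (fun _ => zero_le_one)
    (by simpa using h.symm) one_ne_zero (m := j)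

end LinearAlgebra

section Pairs

variable {K V : Type*} [Field K] [AddCommGroup V] [Module K V]

lemma linearIndependent_pair_of_notMem_span_singleton {p q : V} (hp : p ≠ 0)
    (hq : q ∉ span K {p}) : LinearIndependent K ![p, q] :=
  (LinearIndependent.pair_iff' hp).mpr fun a hpq => hq (mem_span_singleton.mpr ⟨a, hpq⟩)

lemma exists_eq_smul_of_not_linearIndependent_pair {u v : V}
    (h : ¬ LinearIndependent K ![u, v]) : ∃ (w : V) (a b : K), u = a • w ∧ v = b • w := by
  by_cases hu : u = 0
  · exact ⟨v, 0, 1, by simp [hu], by simp⟩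
  · obtain ⟨b, hb⟩ := not_forall_not.mp ((LinearIndependent.pair_iff' hu).not.mp h)
    exact ⟨u, 1, b, by simp, hb.symm⟩

lemma span_pair_eq_span_range_of_linearIndependent {u : Fin 2 → V} {p q : V}
    (hpq : LinearIndependent K ![p, q]) (hp : p ∈ span K (Set.range u))
    (hq : q ∈ span K (Set.range u)) : span K {p, q} = span K (Set.range u) := by
  have := FiniteDimensional.span_of_finite K (Set.finite_range u)
  refine eq_of_le_of_finrank_le (span_le.mpr ?_) ?_
  · rintro _ (rfl | rfl) <;> assumption
  · rw [← Matrix.range_cons_cons_empty, finrank_span_eq_card hpq]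
    exact finrank_range_le_card (R := K) u

end Pairs

section ProductStates

variable {ι : Type*} [Fintype ι]

lemma sum_normSq_prodState [DecidableEq ι] (e : ι → Fin 2 → ℂ) :
    ∑ x, Complex.normSq (prodState e x) = ∏ i, ∑ j, Complex.normSq (e i j) := by
  simp only [prodState, map_prod]
  rw [Finset.prod_univ_sum, Fintype.piFinset_univ]

lemma prodState_ne_zero [DecidableEq ι] {e : ι → Fin 2 → ℂ} (he : ∀ i, IsUnitQubit (e i)) :
    prodState e ≠ 0 := by
  intro h
  have := sum_normSq_prodState e
  simp_rw [h, Pi.zero_apply, map_zero, Finset.sum_const_zero] at this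
  exact zero_ne_one (this.trans (Finset.prod_eq_one fun i _ => he i))

lemma prodState_smul (c : ι → ℂ) (e : ι → Fin 2 → ℂ) :
    prodState (fun i => c i • e i) = (∏ i, c i) • prodState e := by
  ext x
  simp [prodState, Finset.prod_mul_distrib]

lemma isProductState_of_eq_prodState [DecidableEq ι] {ψ : (ι → Fin 2) → ℂ}
    {e : ι → Fin 2 → ℂ} (hψ : IsUnitState ψ) (he : ψ = prodState e) : IsProductState ψ := by
  set n : ι → ℝ := fun i => ∑ j, Complex.normSq (e i j)
  have hn : ∀ i, 0 ≤ n i := fun i => Finset.sum_nonneg fun j _ => Complex.normSq_nonneg _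
  have hprod : ∏ i, n i = 1 := by rw [← sum_normSq_prodState, ← he]; exact hψ
  have hn0 : ∀ i, n i ≠ 0 := fun i => (Finset.prod_ne_zero_iff.mp (hprod ▸ one_ne_zero)) i
    (Finset.mem_univ i)
  refine ⟨fun i => ((√(n i) : ℝ) : ℂ)⁻¹ • e i, fun i => ?_, ?_⟩
  · simp only [IsUnitQubit, Pi.smul_apply, smul_eq_mul, map_mul, map_inv₀, Complex.normSq_ofReal,
      Real.mul_self_sqrt (hn i), ← Finset.mul_sum]
    exact inv_mul_cancel₀ (hn0 i)
  · rw [prodState_smul, Finset.prod_inv_distrib, ← Complex.ofReal_prod,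
      ← Real.sqrt_prod _ fun i _ => hn i, hprod, Real.sqrt_one, Complex.ofReal_one, inv_one,
      one_smul, he]

end ProductStates

section SplitQubit

variable {N : ℕ}

abbrev OtherQubits (k : Fin N) : Type := {i : Fin N // i ∉ ({k} : Finset (Fin N))}

lemma mergeCompl_restrict (S : Finset (Fin N)) (x : {i : Fin N // i ∉ S} → Fin 2)
    (z : {i : Fin N // i ∈ S} → Fin 2) :
    (fun i : {i // i ∉ S} => mergeCompl S x z i) = x := by
  ext i
  simp [mergeCompl, i.2]

def slice (ψ : (Fin N → Fin 2) → ℂ) (k : Fin N) (j : Fin 2) : (OtherQubits k → Fin 2) → ℂ :=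
  fun y => ψ (mergeCompl {k} y fun _ => j)

lemma apply_eq_slice (ψ : (Fin N → Fin 2) → ℂ) (k : Fin N) (x : Fin N → Fin 2) :
    ψ x = slice ψ k (x k) (fun i => x i) := by
  congr 1
  ext i
  by_cases hi : i = k <;> simp [mergeCompl, hi]

lemma reducedState_singleton (ψ : (Fin N → Fin 2) → ℂ) (k : Fin N) :
    reducedState ψ {k} = ∑ j, proj (slice ψ k j) := by
  ext x y
  simp only [reducedState, Matrix.of_apply, Matrix.sum_apply, proj, slice]
  exact (Equiv.funUnique _ (Fin 2)).symm.sum_comp _ |>.symm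

lemma prodState_eq_mul (e : Fin N → Fin 2 → ℂ) (k : Fin N) (x : Fin N → Fin 2) :
    prodState e x = e k (x k) * prodState (fun i : OtherQubits k => e i) (fun i => x i) := by
  rw [prodState, ← Finset.prod_mul_prod_compl {k}, Finset.prod_singleton, prodState,
    Finset.prod_subtype _ fun i => Finset.mem_compl]

def insertAt (k : Fin N) (a : Fin 2 → ℂ) (e : OtherQubits k → Fin 2 → ℂ) :
    Fin N → Fin 2 → ℂ :=
  fun i => if h : i = k then a else e ⟨i, by simpa using h⟩

lemma prodState_insertAt (k : Fin N) (a : Fin 2 → ℂ) (e : OtherQubits k → Fin 2 → ℂ)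
    (x : Fin N → Fin 2) :
    prodState (insertAt k a e) x = a (x k) * prodState e (fun i => x i) := by
  rw [prodState_eq_mul _ k]
  congr 1
  · simp [insertAt]
  · refine Finset.prod_congr rfl fun i _ => ?_
    simp [insertAt, show (i : Fin N) ≠ k by simpa using i.2]

end SplitQubit

section Fragile

variable {N : ℕ} {ψ : (Fin N → Fin 2) → ℂ} {k : Fin N}

lemma isProductState_of_apply_eq_mul (hψ : IsUnitState ψ)
    (hsep : IsSeparableDensity (reducedState ψ {k})) {v : Fin 2 → ℂ}
    {σ : (OtherQubits k → Fin 2) → ℂ} (h : ∀ x, ψ x = v (x k) * σ (fun i => x i)) :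
    IsProductState ψ := by
  obtain ⟨n, w, e, hw, hw1, he, hρ⟩ := hsep
  obtain ⟨m, -, hm⟩ := Finset.exists_ne_zero_of_sum_ne_zero (hw1 ▸ one_ne_zero)
  have hslice : ∀ j, slice ψ k j = v j • σ := fun j => by
    ext y
    rw [slice, h, mergeCompl_restrict]
    simp [mergeCompl]
  have hmem : prodState (e m) ∈ span ℂ {σ} := by
    refine span_le.mpr ?_ (mem_span_range_of_sum_proj_eq hw
      ((reducedState_singleton ψ k).symm.trans hρ) hm)
    rintro _ ⟨j, rfl⟩
    exact hslice j ▸ smul_mem _ _ (mem_span_singleton_self σ)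
  obtain ⟨c, hc⟩ := mem_span_singleton.mp hmem
  have hc0 : c ≠ 0 := by
    rintro rfl
    exact prodState_ne_zero (he m) (by simpa using hc.symm)
  refine isProductState_of_eq_prodState hψ (e := insertAt k (c⁻¹ • v) (e m))
    (funext fun x => ?_)
  rw [prodState_insertAt, h, ← hc]
  simp only [Pi.smul_apply, smul_eq_mul]
  field_simp

lemma exists_eq_prodState_add_prodState (hψ : IsUnitState ψ) (hent : IsEntangledState ψ)
    (hsep : IsSeparableDensity (reducedState ψ {k})) :
    ∃ E F : Fin N → Fin 2 → ℂ, ψ = prodState E + prodState F := by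
  obtain ⟨n, w, e, hw, hw1, he, hρ⟩ := id hsep
  replace hρ := (reducedState_singleton ψ k).symm.trans hρ
  obtain ⟨m₀, -, hm₀⟩ := Finset.exists_ne_zero_of_sum_ne_zero (hw1 ▸ one_ne_zero)
  set p := prodState (e m₀)
  by_cases hq : ∃ m, w m ≠ 0 ∧ prodState (e m) ∉ span ℂ {p}
  · obtain ⟨m₁, hm₁, hq⟩ := hq
    have hpq := linearIndependent_pair_of_notMem_span_singleton (prodState_ne_zero (he m₀)) hq
    have hspan := span_pair_eq_span_range_of_linearIndependent hpq
      (mem_span_range_of_sum_proj_eq hw hρ hm₀) (mem_span_range_of_sum_proj_eq hw hρ hm₁)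
    choose a b hab using fun j =>
      mem_span_pair.mp (hspan ▸ subset_span (Set.mem_range_self j))
    refine ⟨insertAt k a (e m₀), insertAt k b (e m₁), funext fun x => ?_⟩
    rw [Pi.add_apply, prodState_insertAt, prodState_insertAt, apply_eq_slice ψ k x, ← hab]
    rfl
  · push Not at hq
    have hslice : ∀ j, slice ψ k j ∈ span ℂ {p} := fun j => by
      refine span_le.mpr ?_ (mem_span_image_of_sum_proj_eq hρ j)
      rintro _ ⟨m, hm, rfl⟩
      exact hq m hm
    choose c hc using fun j => mem_span_singleton.mp (hslice j)
    refine absurd (isProductState_of_apply_eq_mul hψ hsep (v := c) (σ := p) fun x => ?_) hent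
    rw [apply_eq_slice ψ k x, ← hc]
    rfl

lemma linearIndependent_of_eq_prodState_add_prodState (hψ : IsUnitState ψ)
    (hent : IsEntangledState ψ) (hsep : IsSeparableDensity (reducedState ψ {k}))
    {E F : Fin N → Fin 2 → ℂ} (hEF : ψ = prodState E + prodState F) :
    LinearIndependent ℂ ![E k, F k] := by
  by_contra hdep
  obtain ⟨u, a, b, hEu, hFu⟩ := exists_eq_smul_of_not_linearIndependent_pair hdep
  refine hent (isProductState_of_apply_eq_mul hψ hsep (v := u)
    (σ := a • prodState (fun i : OtherQubits k => E i)
      + b • prodState (fun i : OtherQubits k => F i))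
    fun x => ?_)
  rw [hEF, Pi.add_apply, prodState_eq_mul E k, prodState_eq_mul F k, hEu, hFu]
  simp only [Pi.add_apply, Pi.smul_apply, smul_eq_mul]
  ring

end Fragile

section LocalOperators

variable {N : ℕ}

lemma applyLocal_add (B : Fin N → Matrix (Fin 2) (Fin 2) ℂ) (φ χ : (Fin N → Fin 2) → ℂ) :
    applyLocal B (φ + χ) = applyLocal B φ + applyLocal B χ := by
  ext x
  simp [applyLocal, mul_add, Finset.sum_add_distrib]

lemma applyLocal_smul (s : Fin N → ℂ) (B : Fin N → Matrix (Fin 2) (Fin 2) ℂ)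
    (φ : (Fin N → Fin 2) → ℂ) :
    applyLocal (fun i => s i • B i) φ = (∏ i, s i) • applyLocal B φ := by
  ext x
  simp [applyLocal, Finset.prod_mul_distrib, Finset.mul_sum, mul_assoc]

lemma applyLocal_prodState (B : Fin N → Matrix (Fin 2) (Fin 2) ℂ) (e : Fin N → Fin 2 → ℂ) :
    applyLocal B (prodState e) = prodState fun i => B i *ᵥ e i := by
  ext x
  simp only [applyLocal, prodState, mulVec, dotProduct, ← Finset.prod_mul_distrib]
  rw [Finset.prod_univ_sum, Fintype.piFinset_univ]

lemma prodState_const_single {ι : Type*} [Fintype ι] (j : Fin 2) :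
    prodState (fun _ : ι => Pi.single j 1) = fun x => if x = fun _ => j then 1 else 0 := by
  ext x
  split_ifs with hx
  · simp [prodState, hx]
  · obtain ⟨i, hi⟩ := Function.ne_iff.mp hx
    exact Finset.prod_eq_zero (Finset.mem_univ i) (Pi.single_eq_of_ne hi 1)

lemma ghzState_eq (N : ℕ) :
    ghzState N = ((√2 : ℝ) : ℂ)⁻¹ •
      (prodState (fun _ : Fin N => Pi.single 0 1) + prodState fun _ => Pi.single 1 1) := by
  ext x
  simp [ghzState, prodState_const_single, div_eq_inv_mul]

lemma exists_applyLocal_eq_ghzState [NeZero N] {E F : Fin N → Fin 2 → ℂ}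
    (hEF : ∀ i, LinearIndependent ℂ ![E i, F i]) :
    ∃ B : Fin N → Matrix (Fin 2) (Fin 2) ℂ, (∀ i, IsUnit (B i)) ∧
      applyLocal B (prodState E + prodState F) = ghzState N := by
  set M : Fin N → Matrix (Fin 2) (Fin 2) ℂ := fun i => (Matrix.of ![E i, F i])ᵀ
  have hM : ∀ i, IsUnit (M i) := fun i => linearIndependent_cols_iff_isUnit.mp (hEF i)
  have hinv : ∀ i j, (M i)⁻¹ *ᵥ (M i).col j = Pi.single j 1 := fun i j => by
    rw [← mulVec_single_one, mulVec_mulVec,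
      nonsing_inv_mul _ ((M i).isUnit_iff_isUnit_det.mp (hM i)), one_mulVec]
  have hE : ∀ i, (M i)⁻¹ *ᵥ E i = Pi.single 0 1 := fun i => hinv i 0
  have hF : ∀ i, (M i)⁻¹ *ᵥ F i = Pi.single 1 1 := fun i => hinv i 1
  set s : Fin N → ℂ := Function.update 1 0 ((√2 : ℝ) : ℂ)⁻¹
  have hs : ∀ i, s i ≠ 0 := fun i => by
    by_cases hi : i = 0 <;> simp [s, hi]
  refine ⟨fun i => s i • (M i)⁻¹, fun i => ?_, ?_⟩
  · exact ((isUnit_nonsing_inv_iff.mpr (hM i)).smul (Units.mk0 (s i) (hs i)) :)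
  · rw [applyLocal_smul, applyLocal_add, applyLocal_prodState, applyLocal_prodState, ghzState_eq,
      Finset.prod_update_of_mem (Finset.mem_univ 0)]
    simp [hE, hF]

end LocalOperators

/-- **Theorem 2 of the paper.** For `N ≥ 3`, every entangled `N`-qubit pure
state that is fragile with respect to the loss of every single qubit is SLOCC-equivalent to
the GHZ state: some tensor product of invertible `2 × 2` matrices maps it, up to a global
phase, to `|GHZ_N⟩`. -/
theorem fragile_all_implies_slocc_ghz {N : ℕ} (hN : 3 ≤ N)
    (ψ : (Fin N → Fin 2) → ℂ) (hunit : IsUnitState ψ) (hent : IsEntangledState ψ)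
    (hfrag : ∀ k : Fin N, IsSeparableDensity (reducedState ψ ({k} : Finset (Fin N)))) :
    ∃ (B : Fin N → Matrix (Fin 2) (Fin 2) ℂ) (c : ℂ),
      (∀ i, IsUnit (B i)) ∧ ‖c‖ = 1 ∧
      applyLocal B ψ = c • ghzState N := by
  have : NeZero N := ⟨by omega⟩
  obtain ⟨E, F, hEF⟩ := exists_eq_prodState_add_prodState hunit hent (hfrag 0)
  obtain ⟨B, hB, hBψ⟩ := exists_applyLocal_eq_ghzState fun i =>
    linearIndependent_of_eq_prodState_add_prodState hunit hent (hfrag i) hEF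
  exact ⟨B, 1, hB, norm_one, by rw [hEF, hBψ, one_smul]⟩
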